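/- Let x_1 < ⋯ < x_d be successive nonzero vectors in c_00, let s_i = min supp(x_i) and t_i = max supp(x_i). If Σ_{i=1}^d c_i e_{s_i} is an (n, ε)-basic special convex combination, then Σ_{i=1}^d c_i e_{t_i} is an (n, 2ε)-basic special convex combination. -/

import Mathlib

/-- `A < B`: every element of `A` is less than every element of `B`. -/
def BlockLt (A B : Finset ℕ) : Prop := ∀ a ∈ A, ∀ b ∈ B, a < b

/-- The Schreier families, defined inductively. -/
def Schreier : ℕ → Set (Finset ℕ)
  | 0 => {F | ∃ i : ℕ, F = {i}}
  | n + 1 => {F | ∃ L : List (Finset ℕ), L ≠ [] ∧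
      (∀ A ∈ L, A ∈ Schreier n) ∧ L.Chain' BlockLt ∧
      (∀ a ∈ L.headI, L.length ≤ a) ∧ F = L.foldr (· ∪ ·) ∅}

/-- The family `S_n ∗ A_3`. -/
def SchreierA3 (n : ℕ) : Set (Finset ℕ) :=
  {F | ∃ L : List (Finset ℕ), L ≠ [] ∧
      (∀ A ∈ L, A.Nonempty ∧ A.card ≤ 3) ∧ L.Chain' BlockLt ∧
      (L.map fun A => sInf (A : Set ℕ)).toFinset ∈ Schreier n ∧
      F = L.foldr (· ∪ ·) ∅}

/-- `Σ_{i∈F} c i • e i` is an `(n, ε)`-basic special convex combination. -/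
def IsBasicSCC (n : ℕ) (ε : ℝ) (F : Finset ℕ) (c : ℕ → ℝ) : Prop :=
  F ∈ Schreier n ∧ (∀ i ∈ F, 0 ≤ c i) ∧ (∑ i ∈ F, c i) = 1 ∧
    ∀ G ⊆ F, G ∈ Schreier (n - 1) → (∑ i ∈ G, c i) < ε

/-!
Since `s i ≤ t i < s j` for `i < j`, the set `{t i}` is a shift to the right of `{s i}`, so it lies
in `S_n` by spreading. If `G = {t i | i ∈ I}` lies in `S_{n-1}` and `i₁ = min I`, pairing each
`s i` (`i ∈ I`, `i ≠ i₁`) with `t` of the predecessor of `i` in `I` exhibits `{s i | i ∈ I, i ≠ i₁}`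
as a shift to the right of a subset of `G`, so it lies in `S_{n-1}`; so does `{s i₁}`, being a
singleton inside a block of `S_n`. Each of the two carries weight `< ε`, hence `G` carries `< 2ε`.
-/

theorem BlockLt.trans {A B C : Finset ℕ} (hB : B.Nonempty) (hAB : BlockLt A B)
    (hBC : BlockLt B C) : BlockLt A C := fun a ha c hc =>
  let ⟨b, hb⟩ := hB
  (hAB a ha b hb).trans (hBC b hb c hc)

theorem List.pairwise_blockLt_of_isChain {L : List (Finset ℕ)} (hL : ∀ A ∈ L, A.Nonempty)
    (h : L.IsChain BlockLt) : L.Pairwise BlockLt := by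
  let R : Finset ℕ → Finset ℕ → Prop := fun A B => B.Nonempty ∧ BlockLt A B
  have : Trans R R R := ⟨fun ⟨hB, hAB⟩ ⟨hC, hBC⟩ => ⟨hC, hAB.trans hB hBC⟩⟩
  exact ((List.IsChain.imp_of_mem_imp (fun _ B _ hB hAB => ⟨hL B hB, hAB⟩) h).pairwise).imp
    And.right

theorem List.mem_foldr_union {L : List (Finset ℕ)} {a : ℕ} :
    a ∈ L.foldr (· ∪ ·) ∅ ↔ ∃ A ∈ L, a ∈ A := by
  induction L with
  | nil => simp
  | cons B T ih => simp [ih]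

namespace Schreier

theorem nonempty_of_mem {n : ℕ} {F : Finset ℕ} (hF : F ∈ Schreier n) : F.Nonempty := by
  induction n generalizing F with
  | zero => obtain ⟨i, rfl⟩ := hF; exact Finset.singleton_nonempty i
  | succ n ih =>
    obtain ⟨L, hL, hLS, -, -, rfl⟩ := hF
    obtain ⟨A, hA⟩ := List.exists_mem_of_ne_nil L hL
    obtain ⟨a, ha⟩ := ih (hLS A hA)
    exact ⟨a, List.mem_foldr_union.2 ⟨A, hA, ha⟩⟩

theorem mem_succ_iff {n : ℕ} {F : Finset ℕ} :
    F ∈ Schreier (n + 1) ↔ ∃ L : List (Finset ℕ), L ≠ [] ∧ (∀ A ∈ L, A ∈ Schreier n) ∧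
      L.Pairwise BlockLt ∧ (∀ A ∈ L, ∀ a ∈ A, L.length ≤ a) ∧ F = L.foldr (· ∪ ·) ∅ := by
  constructor
  · rintro ⟨L, hL, hLS, hchain, hhead, rfl⟩
    have hpw := List.pairwise_blockLt_of_isChain (fun A hA => nonempty_of_mem (hLS A hA)) hchain
    refine ⟨L, hL, hLS, hpw, ?_, rfl⟩
    obtain ⟨H, T, rfl⟩ := List.exists_cons_of_ne_nil hL
    obtain ⟨y, hy⟩ := nonempty_of_mem (hLS H List.mem_cons_self)
    rintro A (_ | ⟨_, hA⟩) a ha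
    · exact hhead a ha
    · exact (hhead y hy).trans (List.rel_of_pairwise_cons hpw hA y hy a ha).le
  · rintro ⟨L, hL, hLS, hpw, hlen, rfl⟩
    obtain ⟨H, T, rfl⟩ := List.exists_cons_of_ne_nil hL
    exact ⟨_, hL, hLS, hpw.isChain, hlen H List.mem_cons_self, rfl⟩

-- Spreading and heredity of `S_n` in one statement.
theorem mem_of_strictMonoOn {n : ℕ} {F G : Finset ℕ} {g : ℕ → ℕ} (hF : F ∈ Schreier n)
    (hG : G.Nonempty) (hmaps : Set.MapsTo g G F) (hle : ∀ b ∈ G, g b ≤ b)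
    (hmono : StrictMonoOn g G) : G ∈ Schreier n := by
  induction n generalizing F G with
  | zero =>
    obtain ⟨i, rfl⟩ := hF
    obtain ⟨b₀, hb₀⟩ := hG
    have hgi : ∀ b ∈ G, g b = i := fun b hb => Finset.mem_singleton.1 (hmaps hb)
    refine ⟨b₀, Finset.eq_singleton_iff_unique_mem.2 ⟨hb₀, fun b hb => ?_⟩⟩
    exact hmono.injOn hb hb₀ ((hgi b hb).trans (hgi b₀ hb₀).symm)
  | succ n ih =>
    obtain ⟨L, -, hLS, hpw, hlen, rfl⟩ := mem_succ_iff.1 hF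
    let f : Finset ℕ → Finset ℕ := fun A => G.filter (g · ∈ A)
    let L' := (L.map f).filter (·.Nonempty)
    have hL' : ∀ {B}, B ∈ L' ↔ (∃ A ∈ L, f A = B) ∧ B.Nonempty := by
      simp [L']
    have hunion : G = L'.foldr (· ∪ ·) ∅ := by
      ext b
      refine ⟨fun hb => ?_, fun hb => ?_⟩
      · obtain ⟨A, hA, hgb⟩ := List.mem_foldr_union.1 (hmaps hb)
        have hbA : b ∈ f A := Finset.mem_filter.2 ⟨hb, hgb⟩
        exact List.mem_foldr_union.2 ⟨f A, hL'.2 ⟨⟨A, hA, rfl⟩, b, hbA⟩, hbA⟩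
      · obtain ⟨_, hB, hbB⟩ := List.mem_foldr_union.1 hb
        obtain ⟨⟨A, -, rfl⟩, -⟩ := hL'.1 hB
        exact (Finset.mem_filter.1 hbB).1
    refine mem_succ_iff.2 ⟨L', fun h => ?_, fun B hB => ?_, ?_, fun B hB b hb => ?_, hunion⟩
    · obtain ⟨b, hb⟩ := hG
      simp [hunion, h] at hb
    · obtain ⟨⟨A, hA, rfl⟩, hne⟩ := hL'.1 hB
      exact ih (hLS A hA) hne (fun b hb => (Finset.mem_filter.1 hb).2)
        (fun b hb => hle b (Finset.mem_filter.1 hb).1) (hmono.mono (Finset.filter_subset _ G))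
    · refine (hpw.map f fun A B hAB b hb b' hb' => ?_).sublist List.filter_sublist
      rw [Finset.mem_filter] at hb hb'
      exact (hmono.lt_iff_lt hb.1 hb'.1).1 (hAB _ hb.2 _ hb'.2)
    · obtain ⟨⟨A, hA, rfl⟩, -⟩ := hL'.1 hB
      rw [Finset.mem_filter] at hb
      calc L'.length ≤ (L.map f).length := List.length_filter_le _ _
        _ = L.length := List.length_map _
        _ ≤ g b := hlen A hA _ hb.2
        _ ≤ b := hle b hb.1

theorem mem_of_subset {n : ℕ} {F G : Finset ℕ} (hF : F ∈ Schreier n) (hGF : G ⊆ F)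
    (hG : G.Nonempty) : G ∈ Schreier n :=
  mem_of_strictMonoOn hF hG hGF (fun _ _ => le_rfl) strictMonoOn_id

theorem singleton_mem_pred {n m : ℕ} {F : Finset ℕ} (hF : F ∈ Schreier n) (hm : m ∈ F) :
    {m} ∈ Schreier (n - 1) := by
  cases n with
  | zero => exact ⟨m, rfl⟩
  | succ n =>
    obtain ⟨L, -, hLS, -, -, rfl⟩ := hF
    obtain ⟨A, hA, hmA⟩ := List.mem_foldr_union.1 hm
    exact mem_of_subset (hLS A hA) (Finset.singleton_subset_iff.2 hmA) (Finset.singleton_nonempty m)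

theorem mem_of_forall_exists_le {n : ℕ} {F G : Finset ℕ} (hF : F ∈ Schreier n)
    (hG : G.Nonempty) (hbelow : ∀ b ∈ G, ∃ a ∈ F, a ≤ b)
    (hbetween : ∀ b ∈ G, ∀ b' ∈ G, b < b' → ∃ a ∈ F, b < a ∧ a ≤ b') : G ∈ Schreier n := by
  let g : ℕ → ℕ := fun b => (F.filter (· ≤ b)).sup id
  have hfilter : ∀ {a b}, a ∈ F → a ≤ b → a ≤ g b := fun ha hab =>
    Finset.le_sup (f := id) (Finset.mem_filter.2 ⟨ha, hab⟩)
  have hle : ∀ b, g b ≤ b := fun b => Finset.sup_le fun a ha => (Finset.mem_filter.1 ha).2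
  refine mem_of_strictMonoOn hF hG (fun b hb => ?_) (fun b _ => hle b) fun b hb b' hb' hbb' => ?_
  · obtain ⟨a, ha, hab⟩ := hbelow b hb
    obtain ⟨a', ha', hga⟩ :=
      Finset.exists_mem_eq_sup (F.filter (· ≤ b)) ⟨a, Finset.mem_filter.2 ⟨ha, hab⟩⟩ id
    rw [Finset.mem_coe, show g b = a' from hga]
    exact (Finset.mem_filter.1 ha').1
  · obtain ⟨a, ha, hba, hab'⟩ := hbetween b hb b' hb' hbb'
    exact ((hle b).trans_lt hba).trans_le (hfilter ha hab')

theorem mem_of_forall_exists_lt {n : ℕ} {F G : Finset ℕ} (hF : F ∈ Schreier n)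
    (hG : G.Nonempty) (hbelow : ∀ b ∈ G, ∃ a ∈ F, a < b)
    (hbetween : ∀ b ∈ G, ∀ b' ∈ G, b < b' → ∃ a ∈ F, b ≤ a ∧ a < b') : G ∈ Schreier n := by
  let g : ℕ → ℕ := fun b => (F.filter (· < b)).sup id
  have hfilter : ∀ {a b}, a ∈ F → a < b → a ≤ g b := fun ha hab =>
    Finset.le_sup (f := id) (Finset.mem_filter.2 ⟨ha, hab⟩)
  have hlt : ∀ b ∈ G, g b < b := fun b hb => by
    obtain ⟨a, ha, hab⟩ := hbelow b hb
    exact (Finset.sup_lt_iff (hab.trans_le' (Nat.zero_le a))).2 fun a ha =>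
      (Finset.mem_filter.1 ha).2
  refine mem_of_strictMonoOn hF hG (fun b hb => ?_) (fun b hb => (hlt b hb).le)
    fun b hb b' hb' hbb' => ?_
  · obtain ⟨a, ha, hab⟩ := hbelow b hb
    obtain ⟨a', ha', hga⟩ :=
      Finset.exists_mem_eq_sup (F.filter (· < b)) ⟨a, Finset.mem_filter.2 ⟨ha, hab⟩⟩ id
    rw [Finset.mem_coe, show g b = a' from hga]
    exact (Finset.mem_filter.1 ha').1
  · obtain ⟨a, ha, hba, hab'⟩ := hbetween b hb b' hb' hbb'
    exact ((hlt b hb).trans_le hba).trans_le (hfilter ha hab')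

end Schreier

structure Interlaced {ι : Type*} [LinearOrder ι] (s t : ι → ℕ) : Prop where
  le : ∀ i, s i ≤ t i
  lt : ∀ ⦃i j⦄, i < j → t i < s j

namespace Interlaced

variable {ι : Type*} [LinearOrder ι] {s t : ι → ℕ}

theorem strictMono_left (h : Interlaced s t) : StrictMono s :=
  fun i _ hij => (h.le i).trans_lt (h.lt hij)

theorem strictMono_right (h : Interlaced s t) : StrictMono t :=
  fun _ j hij => (h.lt hij).trans_le (h.le j)

theorem image_right_mem_schreier (h : Interlaced s t) {n : ℕ} {I : Finset ι}
    (hI : I.image s ∈ Schreier n) : I.image t ∈ Schreier n := by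
  refine Schreier.mem_of_forall_exists_le hI
    (Finset.image_nonempty.2 (Finset.image_nonempty.1 (Schreier.nonempty_of_mem hI))) ?_ ?_
  · rintro _ hb
    obtain ⟨i, hi, rfl⟩ := Finset.mem_image.1 hb
    exact ⟨s i, Finset.mem_image_of_mem s hi, h.le i⟩
  · rintro _ hb _ hb' hbb'
    obtain ⟨i, -, rfl⟩ := Finset.mem_image.1 hb
    obtain ⟨j, hj, rfl⟩ := Finset.mem_image.1 hb'
    exact ⟨s j, Finset.mem_image_of_mem s hj, h.lt (h.strictMono_right.lt_iff_lt.1 hbb'),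
      h.le j⟩

theorem image_left_erase_min'_mem_schreier (h : Interlaced s t) {n : ℕ} {I : Finset ι}
    (hI : I.Nonempty) (hIt : I.image t ∈ Schreier n) (hI' : (I.erase (I.min' hI)).Nonempty) :
    (I.erase (I.min' hI)).image s ∈ Schreier n := by
  refine Schreier.mem_of_forall_exists_lt hIt (Finset.image_nonempty.2 hI') ?_ ?_
  · rintro _ hb
    obtain ⟨i, hi, rfl⟩ := Finset.mem_image.1 hb
    have hmin : I.min' hI < i :=
      (I.min'_le i (Finset.mem_of_mem_erase hi)).lt_of_ne (Finset.ne_of_mem_erase hi).symm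
    exact ⟨t (I.min' hI), Finset.mem_image_of_mem t (I.min'_mem hI), h.lt hmin⟩
  · rintro _ hb _ hb' hbb'
    obtain ⟨i, hi, rfl⟩ := Finset.mem_image.1 hb
    obtain ⟨j, -, rfl⟩ := Finset.mem_image.1 hb'
    exact ⟨t i, Finset.mem_image_of_mem t (Finset.mem_of_mem_erase hi), h.le i,
      h.lt (h.strictMono_left.lt_iff_lt.1 hbb')⟩

theorem isBasicSCC_two_mul [Fintype ι] (h : Interlaced s t) {n : ℕ} {ε : ℝ} {cs ct : ℕ → ℝ}
    (hc : ∀ i, ct (t i) = cs (s i)) (hs : IsBasicSCC n ε (Finset.univ.image s) cs) :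
    IsBasicSCC n (2 * ε) (Finset.univ.image t) ct := by
  classical
  obtain ⟨hS, hnonneg, hsum, hsmall⟩ := hs
  have hmem : ∀ i, s i ∈ Finset.univ.image s := fun i =>
    Finset.mem_image_of_mem s (Finset.mem_univ i)
  have hsum_image (I : Finset ι) : ∑ b ∈ I.image t, ct b = ∑ b ∈ I.image s, cs b := by
    rw [Finset.sum_image h.strictMono_right.injective.injOn,
      Finset.sum_image h.strictMono_left.injective.injOn]
    exact Finset.sum_congr rfl fun i _ => hc i
  refine ⟨h.image_right_mem_schreier hS, fun b hb => ?_, (hsum_image _).trans hsum,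
    fun G hG hGS => ?_⟩
  · obtain ⟨i, -, rfl⟩ := Finset.mem_image.1 hb
    exact hc i ▸ hnonneg _ (hmem i)
  obtain ⟨I, -, rfl⟩ := Finset.subset_image_iff.1 hG
  have hI : I.Nonempty := Finset.image_nonempty.1 (Schreier.nonempty_of_mem hGS)
  set i₁ := I.min' hI
  have hfirst : cs (s i₁) < ε := by
    simpa using hsmall {s i₁} (Finset.singleton_subset_iff.2 (hmem i₁))
      (Schreier.singleton_mem_pred hS (hmem i₁))
  have hrest : ∑ b ∈ (I.erase i₁).image s, cs b < ε := by
    rcases (I.erase i₁).eq_empty_or_nonempty with hempty | hne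
    · rw [hempty, Finset.image_empty, Finset.sum_empty]
      exact (hnonneg _ (hmem i₁)).trans_lt hfirst
    · exact hsmall _ (Finset.image_subset_image (Finset.subset_univ _))
        (h.image_left_erase_min'_mem_schreier hI hGS hne)
  calc ∑ b ∈ I.image t, ct b = ∑ b ∈ I.image s, cs b := hsum_image I
    _ = cs (s i₁) + ∑ b ∈ (I.erase i₁).image s, cs b := by
      rw [Finset.image_erase h.strictMono_left.injective,
        Finset.add_sum_erase _ _ (Finset.mem_image_of_mem s (I.min'_mem hI))]
    _ < 2 * ε := by linarith

end Interlaced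

/-- If `x_1 < ⋯ < x_d` are successive nonzero vectors in `c₀₀`, `s i`/`t i` are the
    minima/maxima of their supports, and `Σ c i e_{s i}` is an `(n,ε)`-basic scc,
    then `Σ c i e_{t i}` is an `(n, 2ε)`-basic scc. -/
theorem stmt_3 (n : ℕ) (ε : ℝ) (d : ℕ) (x : Fin d → (ℕ →₀ ℝ))
    (hne : ∀ i, (x i).support.Nonempty)
    (hsucc : ∀ i j : Fin d, i < j →
      ∀ a ∈ (x i).support, ∀ b ∈ (x j).support, a < b)
    (c : Fin d → ℝ) (cs ct : ℕ → ℝ)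
    (hcs : ∀ i, cs ((x i).support.min' (hne i)) = c i)
    (hct : ∀ i, ct ((x i).support.max' (hne i)) = c i)
    (h : IsBasicSCC n ε
      (Finset.image (fun i => (x i).support.min' (hne i)) Finset.univ) cs) :
    IsBasicSCC n (2 * ε)
      (Finset.image (fun i => (x i).support.max' (hne i)) Finset.univ) ct := by
  have hx : Interlaced (fun i => (x i).support.min' (hne i))
      (fun i => (x i).support.max' (hne i)) :=
    ⟨fun i => Finset.min'_le_max' _ (hne i),
      fun i j hij => hsucc i j hij _ (Finset.max'_mem _ _) _ (Finset.min'_mem _ _)⟩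
  exact hx.isBasicSCC_two_mul (fun i => (hct i).trans (hcs i).symm) h
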